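/- arXiv:2007.10856 — 2 statements merged into one kernel-verified Lean document; each statement's English description precedes it below -/
import Mathlib

section
/- Let p : ℝ³ → ℝ be a polynomial function and q : ℝ³ → ℝ³ a vector field with polynomial components. If ∇×q = 𝔭p as functions on ℝ³, then p = 0 (identically). In particular, for any r and s the sum ∇×𝐏_r + 𝔭(P_s) of subspaces of vector fields on ℝ³ is direct. -/
open MeasureTheory

/-- Divergence of a vector field on ℝ³. -/
noncomputable def pdiv (v : (Fin 3 → ℝ) → (Fin 3 → ℝ)) (x : Fin 3 → ℝ) : ℝ :=
  ∑ i : Fin 3, fderiv ℝ (fun y => v y i) x (Pi.single i 1)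

/-- Curl of a vector field on ℝ³. -/
noncomputable def pcurl (v : (Fin 3 → ℝ) → (Fin 3 → ℝ)) (x : Fin 3 → ℝ) : Fin 3 → ℝ :=
  ![fderiv ℝ (fun y => v y 2) x (Pi.single 1 1) - fderiv ℝ (fun y => v y 1) x (Pi.single 2 1),
    fderiv ℝ (fun y => v y 0) x (Pi.single 2 1) - fderiv ℝ (fun y => v y 2) x (Pi.single 0 1),
    fderiv ℝ (fun y => v y 1) x (Pi.single 0 1) - fderiv ℝ (fun y => v y 0) x (Pi.single 1 1)]

/-- Gradient of a scalar field on ℝ³. -/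
noncomputable def pgrad (p : (Fin 3 → ℝ) → ℝ) (x : Fin 3 → ℝ) : Fin 3 → ℝ :=
  fun i => fderiv ℝ p x (Pi.single i 1)

/-- The Poincaré-type operator 𝔭: (𝔭u)(x) = (∫₀¹ t² u(tx) dt) x. -/
noncomputable def poin (u : (Fin 3 → ℝ) → ℝ) (x : Fin 3 → ℝ) : Fin 3 → ℝ :=
  (∫ t in (0:ℝ)..1, t ^ 2 * u (t • x)) • x

/-- `u` is a polynomial function of total degree at most `r` (P_r = {0} if r < 0). -/
def IsPolyDeg (r : ℤ) (u : (Fin 3 → ℝ) → ℝ) : Prop :=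
  ∃ p : MvPolynomial (Fin 3) ℝ, (p = 0 ∨ (p.totalDegree : ℤ) ≤ r) ∧
    ∀ x, MvPolynomial.eval x p = u x

/-- `v` is a vector field with polynomial components of total degree at most `r`. -/
def IsVecPolyDeg (r : ℤ) (v : (Fin 3 → ℝ) → (Fin 3 → ℝ)) : Prop :=
  ∀ i, IsPolyDeg r fun x => v x i

/-- `u` is a polynomial function. -/
def IsPolyFun (u : (Fin 3 → ℝ) → ℝ) : Prop :=
  ∃ p : MvPolynomial (Fin 3) ℝ, ∀ x, MvPolynomial.eval x p = u x

/-- Membership in S_k = {p ∈ (P̃_k)³ : x·p(x) = 0}. -/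
def MemS (k : ℕ) (v : (Fin 3 → ℝ) → (Fin 3 → ℝ)) : Prop :=
  (∀ i, ∃ p : MvPolynomial (Fin 3) ℝ, p.IsHomogeneous k ∧ ∀ x, MvPolynomial.eval x p = v x i) ∧
    ∀ x, ∑ i : Fin 3, x i * v x i = 0

/-- Membership in the first-family Nédélec space R_k = 𝐏_{k-1} ⊕ S_k. -/
def MemR (k : ℕ) (v : (Fin 3 → ℝ) → (Fin 3 → ℝ)) : Prop :=
  ∃ v₁ v₂, IsVecPolyDeg ((k : ℤ) - 1) v₁ ∧ MemS k v₂ ∧ v = v₁ + v₂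

/-!
Taking the divergence of `∇×q = 𝔭p` kills the left side, and `∇·(𝔭p) = p`: on the homogeneous
component `p_k` of degree `k`, `𝔭` acts as `x ↦ x · p_k(x) / (k + 3)`, while Euler's identity
gives `∇·(x f) = (k + 3) f` for `f` homogeneous of degree `k`. Hence `p = 0`. Since a
polynomial function on `ℝ³` has unique coefficients, all of this can be done with the formal
partial derivatives `MvPolynomial.pderiv`.
-/

namespace MvPolynomial

variable {R σ : Type*}

theorem pderiv_pderiv_comm [CommRing R] (i j : σ) (p : MvPolynomial σ R) :
    pderiv i (pderiv j p) = pderiv j (pderiv i p) := by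
  have h : ⁅pderiv i, pderiv j⁆ = (0 : Derivation R (MvPolynomial σ R) (MvPolynomial σ R)) :=
    derivation_ext fun k => by
      classical rw [Derivation.commutator_apply]; simp [pderiv_X, Pi.single_apply, apply_ite]
  rw [← sub_eq_zero, ← Derivation.commutator_apply, h, Derivation.zero_apply]

theorem IsHomogeneous.eval_smul [CommSemiring R] {φ : MvPolynomial σ R} {n : ℕ}
    (hφ : φ.IsHomogeneous n) (t : R) (x : σ → R) : eval (t • x) φ = t ^ n * eval x φ := by
  rw [eval_eq, eval_eq, Finset.mul_sum]
  refine Finset.sum_congr rfl fun d hd => ?_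
  simp only [Pi.smul_apply, smul_eq_mul, mul_pow, Finset.prod_mul_distrib,
    Finset.prod_pow_eq_pow_sum, ← hφ.degree_eq_sum_deg_support hd]
  ring

variable [Fintype σ]

theorem IsHomogeneous.sum_pderiv_X_mul [CommSemiring R] {φ : MvPolynomial σ R} {n : ℕ}
    (hφ : φ.IsHomogeneous n) : ∑ i : σ, pderiv i (X i * φ) = (n + Fintype.card σ) • φ := by
  simp [Derivation.leibniz, Finset.sum_add_distrib, hφ.sum_X_mul_pderiv, add_smul]

section Radial

variable {K : Type*} [Field K] [CharZero K]

/-- Over `ℝ` this is `x ↦ ∫₀¹ t ^ (d - 1) P (t x) dt` with `d = card σ`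
(`integral_pow_mul_eval_smul`): the degree-`k` part of `P` contributes `1 / (k + d)`. -/
noncomputable def radialAverage (P : MvPolynomial σ K) : MvPolynomial σ K :=
  ∑ k ∈ Finset.range (P.totalDegree + 1),
    C (((k + Fintype.card σ : ℕ) : K)⁻¹) * homogeneousComponent k P

theorem sum_pderiv_X_mul_radialAverage [Nonempty σ] (P : MvPolynomial σ K) :
    ∑ i, pderiv i (X i * radialAverage P) = P := by
  simp only [radialAverage, Finset.mul_sum, map_sum, mul_left_comm (X _) (C _), pderiv_C_mul]
  rw [Finset.sum_comm]
  conv_rhs => rw [← P.sum_homogeneousComponent]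
  refine Finset.sum_congr rfl fun k _ => ?_
  have hk : ((k + Fintype.card σ : ℕ) : K) ≠ 0 :=
    Nat.cast_ne_zero.mpr (Nat.add_pos_right k Fintype.card_pos).ne'
  rw [← Finset.mul_sum, (homogeneousComponent_isHomogeneous k P).sum_pderiv_X_mul,
    ← Nat.cast_smul_eq_nsmul K, smul_eq_C_mul, ← mul_assoc, ← C_mul, inv_mul_cancel₀ hk, C_1,
    one_mul]

theorem integral_pow_mul_eval_smul [Nonempty σ] (P : MvPolynomial σ ℝ) (x : σ → ℝ) :
    ∫ t in (0 : ℝ)..1, t ^ (Fintype.card σ - 1) * eval (t • x) P = eval x (radialAverage P) := by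
  have hcard : Fintype.card σ - 1 + 1 = Fintype.card σ := Nat.sub_add_cancel Fintype.card_pos
  have hsum (t : ℝ) : t ^ (Fintype.card σ - 1) * eval (t • x) P =
      ∑ k ∈ Finset.range (P.totalDegree + 1),
        eval x (homogeneousComponent k P) * t ^ (k + (Fintype.card σ - 1)) := by
    conv_lhs => rw [← P.sum_homogeneousComponent]
    simp only [map_sum, Finset.mul_sum, (homogeneousComponent_isHomogeneous _ P).eval_smul]
    refine Finset.sum_congr rfl fun k _ => ?_
    ring
  simp_rw [hsum]
  rw [intervalIntegral.integral_finsetSum fun k _ =>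
      (by fun_prop : Continuous _).intervalIntegrable _ _, radialAverage, map_sum]
  refine Finset.sum_congr rfl fun k _ => ?_
  rw [intervalIntegral.integral_const_mul, integral_pow, eval_mul, eval_C]
  simp [add_assoc, mul_comm, ← Nat.cast_add_one, hcard]

end Radial

section Calculus

variable {𝕜 : Type*} [NontriviallyNormedField 𝕜]

theorem hasFDerivAt_eval (p : MvPolynomial σ 𝕜) (x : σ → 𝕜) :
    HasFDerivAt (fun y => eval y p)
      (∑ i, eval x (pderiv i p) • (ContinuousLinearMap.proj i : (σ → 𝕜) →L[𝕜] 𝕜)) x := by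
  induction p using MvPolynomial.induction_on with
  | C a =>
    refine ((hasFDerivAt_const a x).congr_of_eventuallyEq (.of_forall fun y => ?_)).congr_fderiv ?_
    · simp
    · ext v; simp
  | add p q hp hq =>
    refine ((hp.add hq).congr_of_eventuallyEq (.of_forall fun y => ?_)).congr_fderiv ?_
    · simp
    · ext v; simp [add_mul, Finset.sum_add_distrib]
  | mul_X p i hp =>
    classical
    have hXi := (ContinuousLinearMap.proj i : (σ → 𝕜) →L[𝕜] 𝕜).hasFDerivAt (x := x)
    refine ((hp.mul hXi).congr_of_eventuallyEq (.of_forall fun y => ?_)).congr_fderiv ?_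
    · simp
    · ext v
      simp [pderiv_X, Pi.single_apply, apply_ite, add_mul, ite_mul, Finset.sum_add_distrib,
        Finset.mul_sum, mul_assoc]

theorem fderiv_eval_single [DecidableEq σ] (p : MvPolynomial σ 𝕜) (x : σ → 𝕜) (i : σ) :
    fderiv 𝕜 (fun y => eval y p) x (Pi.single i 1) = eval x (pderiv i p) := by
  simp [(hasFDerivAt_eval p x).fderiv, Pi.single_apply]

end Calculus

end MvPolynomial

open MvPolynomial

noncomputable def polyCurl {R : Type*} [CommRing R] (Q : Fin 3 → MvPolynomial (Fin 3) R) :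
    Fin 3 → MvPolynomial (Fin 3) R :=
  ![pderiv 1 (Q 2) - pderiv 2 (Q 1), pderiv 2 (Q 0) - pderiv 0 (Q 2),
    pderiv 0 (Q 1) - pderiv 1 (Q 0)]

theorem sum_pderiv_polyCurl {R : Type*} [CommRing R] (Q : Fin 3 → MvPolynomial (Fin 3) R) :
    ∑ i, pderiv i (polyCurl Q i) = 0 := by
  simp only [polyCurl, Fin.sum_univ_three, Matrix.cons_val, map_sub]
  rw [pderiv_pderiv_comm 0 1, pderiv_pderiv_comm 0 2, pderiv_pderiv_comm 1 2]
  abel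

theorem pcurl_eval (Q : Fin 3 → MvPolynomial (Fin 3) ℝ) (x : Fin 3 → ℝ) :
    pcurl (fun y i => eval y (Q i)) x = fun i => eval x (polyCurl Q i) := by
  ext i
  fin_cases i <;> simp [pcurl, polyCurl, fderiv_eval_single]

theorem poin_eval (P : MvPolynomial (Fin 3) ℝ) (x : Fin 3 → ℝ) :
    poin (fun y => eval y P) x = fun i => eval x (X i * radialAverage P) := by
  ext i
  have h := integral_pow_mul_eval_smul P x
  rw [Fintype.card_fin] at h
  simp [poin, h, mul_comm]

theorem eq_zero_of_pcurl_eq_poin (p : (Fin 3 → ℝ) → ℝ) (q : (Fin 3 → ℝ) → (Fin 3 → ℝ))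
    (hp : IsPolyFun p) (hq : ∀ i, IsPolyFun fun x => q x i)
    (h : ∀ x, pcurl q x = poin p x) (x : Fin 3 → ℝ) : p x = 0 := by
  obtain ⟨P, rfl⟩ : ∃ P : MvPolynomial (Fin 3) ℝ, p = fun y => eval y P :=
    let ⟨P, hP⟩ := hp; ⟨P, funext fun y => (hP y).symm⟩
  choose Q hQ using hq
  obtain rfl : q = fun y i => eval y (Q i) := funext fun y => funext fun i => (hQ i y).symm
  have hcurl (i : Fin 3) : polyCurl Q i = X i * radialAverage P :=
    MvPolynomial.funext fun y => by simpa [pcurl_eval, poin_eval] using congrFun (h y) i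
  have hP : P = 0 := by
    rw [← sum_pderiv_X_mul_radialAverage P, ← sum_pderiv_polyCurl Q]
    simp only [hcurl]
  simp [hP]

theorem IsPolyDeg.isPolyFun {r : ℤ} {u : (Fin 3 → ℝ) → ℝ} (hu : IsPolyDeg r u) : IsPolyFun u :=
  let ⟨p, _, hp⟩ := hu; ⟨p, hp⟩

/-- if ∇×q = 𝔭p for polynomial p, q then p = 0; in particular
    ∇×𝐏_r + 𝔭(P_s) is a direct sum. -/
theorem stmt_3 :
    (∀ (p : (Fin 3 → ℝ) → ℝ) (q : (Fin 3 → ℝ) → (Fin 3 → ℝ)),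
      IsPolyFun p → (∀ i, IsPolyFun fun x => q x i) →
      (∀ x, pcurl q x = poin p x) → ∀ x, p x = 0) ∧
    ∀ (r s : ℤ) (q : (Fin 3 → ℝ) → (Fin 3 → ℝ)) (p : (Fin 3 → ℝ) → ℝ),
      IsVecPolyDeg r q → IsPolyDeg s p → (∀ x, pcurl q x = poin p x) →
      ∀ x, pcurl q x = 0 ∧ poin p x = 0 := by
  refine ⟨eq_zero_of_pcurl_eq_poin, fun r s q p hq hp h x => ?_⟩
  have hp0 : p = 0 :=
    funext (eq_zero_of_pcurl_eq_poin p q hp.isPolyFun (fun i => (hq i).isPolyFun) h)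
  have hpoin : poin p x = 0 := by simp [poin, hp0]
  exact ⟨(h x).trans hpoin, hpoin⟩
end

section
/- For every integer k ≥ 1, the space S_k = {p ∈ (P̃_k)³ : x·p(x) = 0 for all x ∈ ℝ³} has dimension k(k+2). -/
open MeasureTheory

/-!
Identify `S_k` with the kernel of the map `(P̃_k)³ → P̃_{k+1}`, `p ↦ x · p`. This map is onto,
since every monomial of degree `k + 1` is divisible by some `xᵢ`, so by rank–nullity
`dim S_k = 3 · dim P̃_k - dim P̃_{k+1} = 3 (k+2 choose 2) - (k+3 choose 2) = k (k + 2)`.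
-/

open MvPolynomial Module

namespace MvPolynomial

variable (σ R : Type*)

theorem finrank_homogeneousSubmodule [Fintype σ] [CommRing R] [Nontrivial R] (n : ℕ) :
    finrank R (homogeneousSubmodule σ R n) = (Fintype.card σ + n - 1).choose n := by
  classical
  have hdeg : {d : σ →₀ ℕ | d.degree = n} = ↑((Finset.univ : Finset σ).finsuppAntidiag n) := by
    ext d; simp [Finsupp.degree_eq_sum]
  have b := (basisRestrictSupport R {d : σ →₀ ℕ | d.degree = n}).map
    (LinearEquiv.ofEq _ _ (homogeneousSubmodule_eq_finsupp_supported σ R n).symm)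
  rw [finrank_eq_nat_card_basis b, hdeg, Nat.card_coe_set_eq, Set.ncard_coe_finset,
    Finset.card_finsuppAntidiag_nat_eq_choose, Finset.card_univ]

variable {σ R}

instance [Finite σ] [CommSemiring R] (n : ℕ) : Module.Finite R (homogeneousSubmodule σ R n) :=
  Module.Finite.iff_fg.mpr (homogeneousSubmodule_fg σ R n)

section dotX

variable [Fintype σ] [CommSemiring R]

noncomputable def dotX (n : ℕ) : (σ → homogeneousSubmodule σ R n) →ₗ[R] MvPolynomial σ R :=
  ∑ i, LinearMap.mulLeft R (X i) ∘ₗ (homogeneousSubmodule σ R n).subtype ∘ₗ LinearMap.proj i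

@[simp]
theorem dotX_apply (n : ℕ) (p : σ → homogeneousSubmodule σ R n) :
    dotX n p = ∑ i, X i * (p i : MvPolynomial σ R) := by
  simp [dotX]

theorem range_dotX (n : ℕ) : LinearMap.range (dotX n) = homogeneousSubmodule σ R (n + 1) := by
  refine le_antisymm ?_ ?_
  · rintro - ⟨p, rfl⟩
    rw [dotX_apply, add_comm]
    exact Submodule.sum_mem _ fun i _ => (isHomogeneous_X R i).mul (p i).2
  · rw [← homogeneousSubmodule_one_pow, pow_succ', homogeneousSubmodule_one_pow,
      homogeneousSubmodule_one_eq_span_X, Submodule.mul_le]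
    intro l hl q hq
    obtain ⟨c, rfl⟩ := (Submodule.mem_span_range_iff_exists_fun R).mp hl
    exact ⟨fun i => c i • ⟨q, hq⟩, by simp [Finset.sum_mul]⟩

end dotX

noncomputable def evalVec [CommSemiring R] (n : ℕ) :
    (σ → homogeneousSubmodule σ R n) →ₗ[R] (σ → R) → σ → R where
  toFun p x i := eval x (p i : MvPolynomial σ R)
  map_add' p q := by funext x i; simp
  map_smul' c p := by funext x i; simp

theorem evalVec_injective [CommRing R] [IsDomain R] [Infinite R] (n : ℕ) :
    Function.Injective (evalVec (σ := σ) (R := R) n) := by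
  intro p q hpq
  funext i
  exact Subtype.ext <| MvPolynomial.funext fun x => congrFun (congrFun hpq x) i

theorem finrank_ker_dotX_add [Fintype σ] [Field R] (n : ℕ) :
    finrank R (LinearMap.ker (dotX (σ := σ) (R := R) n)) +
        (Fintype.card σ + n).choose (n + 1) =
      Fintype.card σ * (Fintype.card σ + n - 1).choose n := by
  have h := LinearMap.finrank_range_add_finrank_ker (dotX (σ := σ) (R := R) n)
  rw [range_dotX, finrank_homogeneousSubmodule, finrank_pi_fintype,
    Finset.sum_const, finrank_homogeneousSubmodule, Finset.card_univ, smul_eq_mul,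
    ← add_assoc, Nat.add_sub_cancel] at h
  rw [← h, add_comm]

end MvPolynomial

theorem three_mul_choose_two (k : ℕ) :
    3 * (k + 2).choose 2 = k * (k + 2) + (k + 3).choose 2 := by
  have h2 := Nat.cast_choose_two ℚ (k + 2)
  have h3 := Nat.cast_choose_two ℚ (k + 3)
  push_cast at h2 h3
  qify
  rw [h2, h3]
  ring

theorem setOf_memS_eq (k : ℕ) :
    {v | MemS k v} = ↑((LinearMap.ker (dotX k)).map (evalVec (σ := Fin 3) (R := ℝ) k)) := by
  ext v
  constructor
  · rintro ⟨hhom, horth⟩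
    choose p hp hpv using hhom
    refine ⟨fun i => ⟨p i, (mem_homogeneousSubmodule k _).mpr (hp i)⟩, ?_, ?_⟩
    · rw [SetLike.mem_coe, LinearMap.mem_ker, dotX_apply]
      refine MvPolynomial.funext fun x => ?_
      simpa [hpv] using horth x
    · ext x i
      exact hpv i x
  · rintro ⟨p, hp, rfl⟩
    refine ⟨fun i => ⟨p i, (p i).2, fun x => rfl⟩, fun x => ?_⟩
    simpa [evalVec] using congrArg (eval x) (LinearMap.mem_ker.mp hp)

theorem stmt_10_general (k : ℕ) :
    Module.finrank ℝ ↥(Submodule.span ℝ {v : (Fin 3 → ℝ) → (Fin 3 → ℝ) | MemS k v}) =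
      k * (k + 2) := by
  rw [setOf_memS_eq, Submodule.span_eq, ← LinearEquiv.finrank_eq
    (Submodule.equivMapOfInjective _ (evalVec_injective k) _)]
  have h := finrank_ker_dotX_add (σ := Fin 3) (R := ℝ) k
  rw [Fintype.card_fin, show 3 + k - 1 = k + 2 by omega, Nat.choose_symm_add,
    show 3 + k = k + 1 + 2 by omega, Nat.choose_symm_add, show k + 1 + 2 = k + 3 from rfl] at h
  have := three_mul_choose_two k
  omega

/-- dim S_k = k(k+2). -/
theorem stmt_10 (k : ℕ) (hk : 1 ≤ k) :
    Module.finrank ℝ ↥(Submodule.span ℝ {v : (Fin 3 → ℝ) → (Fin 3 → ℝ) | MemS k v}) =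
      k * (k + 2) :=
  stmt_10_general k
end
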